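/- For every r > 0 and every real x with |x| ≠ sinh r, the Lebesgue integral ∫_{I_x} (x − y)^{−2} dy over the set I_x = {y ∈ ℝ : y ≠ x and the geodesic γ(x,y) intersects B̄_r(i)} equals 2·sinh r/(x² + 1). -/

import Mathlib

/-!
The hyperbolic distance `d` from `i` to `γ(x, y)` satisfies `sinh d = |x y + 1| / |x - y|`, so
`γ(x, y)` meets `B̄_r(i)` iff `|x y + 1| ≤ sinh r · |x - y|`. In the coordinate `t = 1 / (x - y)`
this condition reads `|(x² + 1) t - x| ≤ sinh r`, an interval of length `2 sinh r / (x² + 1)`,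
while the substitution `y = x - 1/t` turns `(x - y)⁻² dy` into `dt`.
-/

open UpperHalfPlane MeasureTheory

/-- The complete hyperbolic geodesic of the upper half-plane with ideal endpoints `a` and `b`:
the Euclidean semicircle `{z ∈ ℍ : |z − (a+b)/2| = |a−b|/2}`. -/
noncomputable def geodesic (a b : ℝ) : Set ℍ :=
  {z : ℍ | ‖(z : ℂ) - (((a + b) / 2 : ℝ) : ℂ)‖ = |a - b| / 2}

/-- The geodesic `γ(a,b)` is tangent to the hyperbolic disc `B_ρ(i)`:
the infimum of the hyperbolic distance from points of the geodesic to `i` equals `ρ`. -/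
def TangentToDisc (a b ρ : ℝ) : Prop :=
  sInf ((fun z : ℍ => dist z UpperHalfPlane.I) '' geodesic a b) = ρ

/-- The geodesic `γ(a,b)` intersects the closed hyperbolic disc `B̄_r(i)`. -/
def MeetsClosedDisc (a b r : ℝ) : Prop :=
  ∃ z ∈ geodesic a b, dist z UpperHalfPlane.I ≤ r

open Real Set

lemma UpperHalfPlane.dist_I_le_iff {r : ℝ} (hr : 0 ≤ r) (z : ℍ) :
    dist z I ≤ r ↔ z.re ^ 2 + z.im ^ 2 + 1 ≤ 2 * z.im * cosh r := by
  rw [← cosh_strictMonoOn.le_iff_le dist_nonneg hr, cosh_dist',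
    div_le_iff₀ (by simp [z.im_pos])]
  simp [mul_comm (cosh r)]

lemma mem_geodesic_iff (a b : ℝ) (z : ℍ) :
    z ∈ geodesic a b ↔ (z.re - (a + b) / 2) ^ 2 + z.im ^ 2 = ((a - b) / 2) ^ 2 := by
  rw [geodesic, mem_ofPred_eq, ← sq_eq_sq₀ (norm_nonneg _) (by positivity), div_pow, sq_abs,
    ← div_pow, Complex.sq_norm, Complex.normSq_apply]
  simp [sq]

lemma meetsClosedDisc_iff {x y r : ℝ} (hxy : x ≠ y) (hr : 0 ≤ r) :
    MeetsClosedDisc x y r ↔ (x * y + 1) ^ 2 ≤ sinh r ^ 2 * (x - y) ^ 2 := by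
  have hC : cosh r ^ 2 = sinh r ^ 2 + 1 := cosh_sq r
  constructor
  · rintro ⟨z, hz, hd⟩
    rw [mem_geodesic_iff] at hz
    rw [dist_I_le_iff hr] at hd
    set u := z.re
    set v := z.im
    have hv : 0 < v := z.im_pos
    -- `W` vanishes at the point of `γ(x, y)` closest to `i`
    set W := (((x + y) / 2) ^ 2 + ((x - y) / 2) ^ 2 + 1) * (u - (x + y) / 2)
      + 2 * ((x + y) / 2) * ((x - y) / 2) ^ 2
    have key : ((x - y) / 2) ^ 2 * ((u ^ 2 + v ^ 2 + 1) ^ 2 - 4 * v ^ 2) - (x * y + 1) ^ 2 * v ^ 2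
        = W ^ 2 := by
      linear_combination (((x - y) / 2) ^ 2 * (2 * u ^ 2 - 2 + v ^ 2 + ((x - y) / 2) ^ 2
        - (u - (x + y) / 2) ^ 2) - (x * y + 1) ^ 2) * hz
    have hN : (u ^ 2 + v ^ 2 + 1) ^ 2 ≤ 4 * v ^ 2 * (sinh r ^ 2 + 1) := by
      rw [← hC]
      nlinarith [sq_nonneg (u ^ 2 + v ^ 2 + 1)]
    have : (x * y + 1) ^ 2 * v ^ 2 ≤ sinh r ^ 2 * (x - y) ^ 2 * v ^ 2 := by
      nlinarith [sq_nonneg W, mul_le_mul_of_nonneg_left hN (sq_nonneg ((x - y) / 2))]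
    exact le_of_mul_le_mul_right this (by positivity)
  · intro h
    set B := x ^ 2 + y ^ 2 + 2
    set P := (x ^ 2 + 1) * (y ^ 2 + 1)
    have hB : 0 < B := by positivity
    have hP : √P ^ 2 = P := Real.sq_sqrt (by positivity)
    have hxy' : 0 < |x - y| := abs_pos.2 (sub_ne_zero.2 hxy)
    have hv : 0 < |x - y| * √P / B := by positivity
    -- the point of `γ(x, y)` closest to `i`
    refine ⟨⟨⟨(x + y) * (x * y + 1) / B, |x - y| * √P / B⟩, hv⟩, ?_, ?_⟩
    · rw [mem_geodesic_iff]
      simp only [UpperHalfPlane.re, UpperHalfPlane.im]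
      field_simp
      linear_combination 4 * (x - y) ^ 2 * hP + 4 * √P ^ 2 * sq_abs (x - y)
    · rw [dist_I_le_iff hr]
      simp only [UpperHalfPlane.re, UpperHalfPlane.im]
      have hsqrt : √P ≤ |x - y| * cosh r := by
        rw [Real.sqrt_le_left (by positivity), mul_pow, sq_abs, hC]
        nlinarith
      field_simp
      have hN : (x + y) ^ 2 * (x * y + 1) ^ 2 + |x - y| ^ 2 * √P ^ 2 + B ^ 2 = 2 * B * P := by
        rw [hP, sq_abs]
        ring
      rw [hN]
      nlinarith [mul_le_mul_of_nonneg_left hsqrt (by positivity : 0 ≤ 2 * B * √P), hP]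

lemma setIntegral_image_sub_inv (x : ℝ) {s : Set ℝ} (hs : MeasurableSet s) (h0 : (0 : ℝ) ∉ s) :
    ∫ y in (fun t ↦ x - t⁻¹) '' s, ((x - y) ^ 2)⁻¹ = volume.real s := by
  have hderiv : ∀ t ∈ s, HasDerivWithinAt (fun t ↦ x - t⁻¹) ((t ^ 2)⁻¹) s t := fun t ht ↦
    (((hasDerivAt_inv (ne_of_mem_of_not_mem ht h0)).const_sub x).congr_deriv (neg_neg _))
      |>.hasDerivWithinAt
  have hinj : InjOn (fun t ↦ x - t⁻¹) s := fun a _ b _ h ↦ inv_injective (sub_right_injective h)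
  rw [integral_image_eq_integral_abs_deriv_smul hs hderiv hinj]
  calc ∫ t in s, |(t ^ 2)⁻¹| • ((x - (x - t⁻¹)) ^ 2)⁻¹ = ∫ t in s, (1 : ℝ) :=
        setIntegral_congr_fun hs fun t ht ↦ by
          simp [ne_of_mem_of_not_mem ht h0]
    _ = volume.real s := by simp

lemma meetsClosedDisc_sub_inv_iff {x t r : ℝ} (ht : t ≠ 0) (hr : 0 ≤ r) :
    MeetsClosedDisc x (x - t⁻¹) r ↔
      t ∈ Icc ((x - sinh r) / (x ^ 2 + 1)) ((x + sinh r) / (x ^ 2 + 1)) := by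
  have hx : 0 < x ^ 2 + 1 := by positivity
  rw [meetsClosedDisc_iff (fun h ↦ inv_ne_zero ht (sub_eq_self.1 h.symm)) hr, mem_Icc,
    div_le_iff₀ hx, le_div_iff₀ hx]
  have hsq : (x * (x - t⁻¹) + 1) ^ 2 ≤ sinh r ^ 2 * (x - (x - t⁻¹)) ^ 2 ↔
      ((x ^ 2 + 1) * t - x) ^ 2 ≤ sinh r ^ 2 := by
    have hl : (x * (x - t⁻¹) + 1) ^ 2 = ((x ^ 2 + 1) * t - x) ^ 2 / t ^ 2 := by
      field_simp
      ring
    rw [hl, sub_sub_cancel, inv_pow, ← div_eq_mul_inv,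
      div_le_div_iff_of_pos_right (by positivity)]
  rw [hsq, sq_le_sq, abs_of_nonneg (sinh_nonneg_iff.2 hr), abs_le]
  constructor <;> intro h <;> constructor <;> linarith [h.1, h.2]

lemma setOf_meetsClosedDisc_eq_image {x r : ℝ} (hr : 0 ≤ r) :
    {y : ℝ | y ≠ x ∧ MeetsClosedDisc x y r} = (fun t ↦ x - t⁻¹) ''
      (Icc ((x - sinh r) / (x ^ 2 + 1)) ((x + sinh r) / (x ^ 2 + 1)) \ {0}) := by
  ext y
  constructor
  · rintro ⟨hyx, hm⟩
    have ht : (x - y)⁻¹ ≠ 0 := inv_ne_zero (sub_ne_zero.2 hyx.symm)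
    refine ⟨(x - y)⁻¹, ⟨?_, ht⟩, by simp⟩
    rwa [← meetsClosedDisc_sub_inv_iff ht hr, inv_inv, sub_sub_cancel]
  · rintro ⟨t, ⟨ht, ht0⟩, rfl⟩
    exact ⟨by simpa using ht0, (meetsClosedDisc_sub_inv_iff ht0 hr).2 ht⟩

theorem integral_over_Ix_general (r : ℝ) (hr : 0 < r) (x : ℝ) :
    ∫ y in {y : ℝ | y ≠ x ∧ MeetsClosedDisc x y r}, ((x - y) ^ 2)⁻¹ =
      2 * Real.sinh r / (x ^ 2 + 1) := by
  have hvol : volume.real (Icc ((x - sinh r) / (x ^ 2 + 1)) ((x + sinh r) / (x ^ 2 + 1)) \ {0})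
      = 2 * sinh r / (x ^ 2 + 1) := by
    have hs : 0 < sinh r := sinh_pos_iff.2 hr
    rw [measureReal_def, measure_sdiff_null (by simp), Real.volume_Icc,
      ENNReal.toReal_ofReal (sub_nonneg.2 (by gcongr; linarith))]
    ring
  rw [setOf_meetsClosedDisc_eq_image hr.le, setIntegral_image_sub_inv x
    (measurableSet_Icc.diff (measurableSet_singleton 0)) (fun h ↦ h.2 rfl), hvol]

/-- For every r > 0 and every real x with |x| ≠ sinh r, the Lebesgue integral of
(x − y)⁻² over I_x = {y ≠ x : γ(x,y) meets B̄_r(i)} equals 2·sinh r/(x² + 1). -/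
theorem integral_over_Ix (r : ℝ) (hr : 0 < r) (x : ℝ) (hx : |x| ≠ Real.sinh r) :
    ∫ y in {y : ℝ | y ≠ x ∧ MeetsClosedDisc x y r}, ((x - y) ^ 2)⁻¹ =
      2 * Real.sinh r / (x ^ 2 + 1) :=
  integral_over_Ix_general r hr x
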